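/- Let κ be an infinite cardinal with κ^{<κ} = κ. Then any two κ-lattice partial orders of size κ in which every condition has two incompatible extensions, which are <κ-closed and in which every decreasing sequence of length <κ has a greatest lower bound, and which are atomless and separative, contain dense subsets order-isomorphic to the tree κ^{<κ} ordered by reverse extension. In particular, such a partial order is forcing-equivalent to Add(κ,1) = κ^{<κ}. -/

import Mathlib

open Cardinal

/-- The tree `κ^{<κ}`: functions `s : α → κ` for `α < κ`, represented as partial
functions on a well-order of type `κ` whose domain is a proper initial segment. -/
def KTree (κ : Cardinal) : Type :=
  {f : κ.ord.ToType → Option κ.ord.ToType // ∃ a : κ.ord.ToType, ∀ x, (f x).isSome ↔ x < a}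

/-- Reverse extension on `κ^{<κ}`: `s ≤ t` iff `s` extends `t`. -/
def KTreeLe {κ : Cardinal} (s t : KTree κ) : Prop :=
  ∀ x, (t.1 x).isSome → s.1 x = t.1 x

/-- Two conditions are compatible if they have a common lower bound. -/
def Compat {P : Type} [PartialOrder P] (p q : P) : Prop := ∃ r, r ≤ p ∧ r ≤ q

/-!
The tree is built inside `P` by recursion on levels. Fix an enumeration `t` of `P` by `κ`. The
root is the top element (the glb of the empty sequence); a node at limit level is the glb of the
nodes below it; the children of a node `p` at level `b` form a maximal antichain below `p` of size
`κ`, one of whose members lies below `t b` whenever `p` is compatible with `t b`. Closure under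
glbs of short decreasing sequences and atomlessness give an antichain of size `κ` below any
condition, Zorn's lemma makes it maximal, and `|P| = κ` bounds its size.

Siblings are incompatible and a node is strictly below its ancestors, so the tree embeds into `P`.
For density, given `r`, a second recursion follows a branch along which some decreasing sequence
below `r` stays below the nodes; at the level `b` with `t b = r` the node is then compatible with
`r`, so one of its children lies below `r`.
-/

open Set

section Compat

variable {P : Type} [PartialOrder P] {p q : P}

theorem compat_refl (p : P) : Compat p p := ⟨p, le_rfl, le_rfl⟩

theorem Compat.symm (h : Compat p q) : Compat q p :=
  let ⟨r, hp, hq⟩ := h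
  ⟨r, hq, hp⟩

end Compat

def HasGLBOfAntitone (κ : Cardinal) (P : Type) [PartialOrder P] : Prop :=
  ∀ (ι : Type) (_ : LinearOrder ι), #ι < κ →
    ∀ q : ι → P, Antitone q → ∃ g : P, IsGLB (Set.range q) g

namespace HasGLBOfAntitone

variable {κ : Cardinal} {P : Type} [PartialOrder P]

theorem exists_forall_le (h : HasGLBOfAntitone κ P) (hκ : κ ≠ 0) : ∃ top : P, ∀ p, p ≤ top := by
  obtain ⟨top, htop⟩ := h Empty inferInstance (by simpa [pos_iff_ne_zero] using hκ)
    isEmptyElim fun a => a.elim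
  exact ⟨top, fun p => htop.2 (by simp [lowerBounds])⟩

theorem exists_isGLB_insert_range (h : HasGLBOfAntitone κ P) (hκ : ℵ₀ ≤ κ) {ι : Type}
    [LinearOrder ι] (hι : #ι < κ) {p : P} {g : ι → P} (hg : Antitone g) (hgp : ∀ i, g i ≤ p) :
    ∃ x, IsGLB (insert p (range g)) x := by
  have hanti : Antitone fun o : WithBot ι => o.elim p g := by
    rintro (_ | i) (_ | j) hij
    · exact le_rfl
    · exact hgp j
    · exact absurd hij (WithBot.not_coe_le_bot i)
    · exact hg (WithBot.coe_le_coe.1 hij)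
  have hcard : #(WithBot ι) < κ :=
    mk_option.trans_lt (add_lt_of_lt hκ hι (one_lt_aleph0.trans_le hκ))
  rw [← Option.range_elim]
  exact h (WithBot ι) inferInstance hcard _ hanti

end HasGLBOfAntitone

theorem WellFoundedLT.exists_fun_of_forall_exists {ι α : Type*} [LT ι] [WellFoundedLT ι]
    [Nonempty α] (R : ι → (ι → α) → α → Prop)
    (hloc : ∀ a f g y, (∀ b < a, f b = g b) → R a f y → R a g y)
    (hR : ∀ a f, (∀ b < a, R b f (f b)) → ∃ y, R a f y) :
    ∃ f : ι → α, ∀ a, R a f (f a) := by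
  classical
  let extend (a : ι) (g : ∀ b < a, α) (b : ι) : α :=
    if h : b < a then g b h else Classical.arbitrary α
  let f : ι → α := WellFoundedLT.fix fun a g => Classical.epsilon (R a (extend a g))
  have hf : ∀ a, f a = Classical.epsilon (R a (extend a fun b _ => f b)) := fun a =>
    WellFoundedLT.fix_eq _ _
  have hextend : ∀ a, ∀ b < a, f b = extend a (fun b _ => f b) b := fun a b hb => by
    simp only [extend, dif_pos hb]
  refine ⟨f, fun a => ?_⟩
  induction a using WellFoundedLT.induction with
  | _ a ih =>
    obtain ⟨y, hy⟩ := hR a f ih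
    have h := Classical.epsilon_spec ⟨y, hloc a f _ y (hextend a) hy⟩
    rw [← hf] at h
    exact hloc a _ f _ (fun b hb => (hextend a b hb).symm) h

section Descent

variable {ι P : Type} [LinearOrder ι] [WellFoundedLT ι] [PartialOrder P] [Nonempty P]

noncomputable def descent (p : P) (step : ι → P → P) : ι → P :=
  WellFoundedLT.fix fun a d =>
    Classical.epsilon (IsGLB (insert p (range fun b : Iio a => step b (d b b.2))))

theorem descent_eq (p : P) (step : ι → P → P) (a : ι) :
    descent p step a =
      Classical.epsilon (IsGLB (insert p (range fun b : Iio a => step b (descent p step b)))) :=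
  WellFoundedLT.fix_eq _ _

theorem descent_congr {p : P} {step step' : ι → P → P} {a : ι}
    (h : ∀ b < a, step b = step' b) : descent p step a = descent p step' a := by
  induction a using WellFoundedLT.induction with
  | _ a ih =>
    rw [descent_eq, descent_eq]
    congr! 5 with b
    rw [h b b.2, ih b b.2 fun c hc => h c (hc.trans b.2)]

variable {κ : Cardinal} {p : P} {step : ι → P → P}

theorem isGLB_descent (hP : HasGLBOfAntitone κ P) (hκ : ℵ₀ ≤ κ) (hι : ∀ a : ι, #(Iio a) < κ)
    (hstep : ∀ b x, step b x ≤ x) (a : ι) :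
    IsGLB (insert p (range fun b : Iio a => step b (descent p step b))) (descent p step a) := by
  induction a using WellFoundedLT.induction with
  | _ a ih =>
    have hle_root : ∀ b : Iio a, step b (descent p step b) ≤ p := fun b =>
      (hstep _ _).trans ((ih b b.2).1 (mem_insert _ _))
    have hanti : Antitone fun b : Iio a => step b (descent p step b) := by
      intro b₁ b₂ hb
      rcases hb.eq_or_lt with rfl | hlt
      · exact le_rfl
      · exact (hstep _ _).trans ((ih b₂ b₂.2).1 (mem_insert_of_mem _ ⟨⟨b₁, hlt⟩, rfl⟩))
    rw [descent_eq]
    exact Classical.epsilon_spec (hP.exists_isGLB_insert_range hκ (hι a) hanti hle_root)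

theorem descent_le (hP : HasGLBOfAntitone κ P) (hκ : ℵ₀ ≤ κ) (hι : ∀ a : ι, #(Iio a) < κ)
    (hstep : ∀ b x, step b x ≤ x) (a : ι) : descent p step a ≤ p :=
  (isGLB_descent hP hκ hι hstep a).1 (mem_insert _ _)

theorem descent_le_step (hP : HasGLBOfAntitone κ P) (hκ : ℵ₀ ≤ κ) (hι : ∀ a : ι, #(Iio a) < κ)
    (hstep : ∀ b x, step b x ≤ x) {a b : ι} (h : b < a) :
    descent p step a ≤ step b (descent p step b) :=
  (isGLB_descent hP hκ hι hstep a).1 (mem_insert_of_mem _ ⟨⟨b, h⟩, rfl⟩)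

theorem le_descent (hP : HasGLBOfAntitone κ P) (hκ : ℵ₀ ≤ κ) (hι : ∀ a : ι, #(Iio a) < κ)
    (hstep : ∀ b x, step b x ≤ x) {x : P} {a : ι} (hxp : x ≤ p)
    (hx : ∀ b < a, x ≤ step b (descent p step b)) : x ≤ descent p step a := by
  refine (isGLB_descent hP hκ hι hstep a).2 ?_
  rintro _ (rfl | ⟨b, rfl⟩)
  exacts [hxp, hx b b.2]

theorem descent_antitone (hP : HasGLBOfAntitone κ P) (hκ : ℵ₀ ≤ κ) (hι : ∀ a : ι, #(Iio a) < κ)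
    (hstep : ∀ b x, step b x ≤ x) : Antitone (descent p step) := fun _ _ hba =>
  le_descent hP hκ hι hstep (descent_le hP hκ hι hstep _) fun _ hc =>
    descent_le_step hP hκ hι hstep (hc.trans_le hba)

end Descent

section Antichain

variable {ι P : Type} [LinearOrder ι] [WellFoundedLT ι] [PartialOrder P] {κ : Cardinal}

theorem exists_antichain_below [Nonempty P] (hP : HasGLBOfAntitone κ P) (hκ : ℵ₀ ≤ κ)
    (hι : ∀ a : ι, #(Iio a) < κ) (hatom : ∀ p : P, ∃ q r : P, q ≤ p ∧ r ≤ p ∧ ¬ Compat q r)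
    (p : P) :
    ∃ e : ι → P, (∀ i, e i ≤ p) ∧ Pairwise fun i j => ¬ Compat (e i) (e j) := by
  choose q r hq hr hqr using hatom
  -- `d` descends through the second halves `r` of successive splittings, so the first half
  -- split off at stage `i` is incompatible with everything below `d j` for `j > i`.
  set d : ι → P := descent p fun _ => r
  have hd : ∀ {i j}, i < j → d j ≤ r (d i) := descent_le_step hP hκ hι fun _ => hr
  have hlt : ∀ i j, i < j → ¬ Compat (q (d i)) (q (d j)) := fun i j hij ⟨s, hsi, hsj⟩ =>
    hqr (d i) ⟨s, hsi, hsj.trans ((hq _).trans (hd hij))⟩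
  refine ⟨fun i => q (d i), fun i => (hq _).trans (descent_le hP hκ hι (fun _ => hr) i), ?_⟩
  intro i j hij
  rcases hij.lt_or_gt with h | h
  exacts [hlt i j h, fun hc => hlt j i h hc.symm]

theorem exists_predense_antichain_superset {p : P} {A : Set P} (hAp : ∀ x ∈ A, x ≤ p)
    (hA : A.Pairwise fun x y => ¬ Compat x y) :
    ∃ M, A ⊆ M ∧ (∀ x ∈ M, x ≤ p) ∧ M.Pairwise (fun x y => ¬ Compat x y) ∧
      ∀ r ≤ p, ∃ x ∈ M, Compat r x := by
  let R : Iic p → Iic p → Prop := fun x y => ¬ Compat (x : P) y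
  have hR : ∀ {x y}, R x y ∨ R y x → R x y := fun h => h.elim id fun h hc => h hc.symm
  obtain ⟨M, hM, hAM⟩ := IsChain.exists_maxChain (r := R) (c := Subtype.val ⁻¹' A)
    fun x hx y hy hxy => Or.inl (hA hx hy (Subtype.coe_ne_coe.2 hxy))
  refine ⟨Subtype.val '' M, fun x hx => ⟨⟨x, hAp x hx⟩, hAM hx, rfl⟩, ?_, ?_, ?_⟩
  · rintro _ ⟨x, -, rfl⟩
    exact x.2
  · rintro _ ⟨x, hx, rfl⟩ _ ⟨y, hy, rfl⟩ hxy
    exact hR (hM.isChain hx hy (ne_of_apply_ne _ hxy))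
  · intro r hr
    by_contra! hM_incompat
    have hchain : IsChain R (insert ⟨r, hr⟩ M) :=
      hM.isChain.insert fun y hy _ => Or.inl (hM_incompat y ⟨y, hy, rfl⟩)
    have hrM : (⟨r, hr⟩ : Iic p) ∈ M := (hM.2 hchain (subset_insert _ _)).symm ▸ mem_insert _ _
    exact hM_incompat r ⟨_, hrM, rfl⟩ (compat_refl r)

theorem exists_children [Nonempty P] [Nonempty ι] (hP : HasGLBOfAntitone κ P) (hκ : ℵ₀ ≤ κ)
    (hι : ∀ a : ι, #(Iio a) < κ) (hatom : ∀ p : P, ∃ q r : P, q ≤ p ∧ r ≤ p ∧ ¬ Compat q r)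
    (hPι : #P ≤ #ι) (p t : P) :
    ∃ c : ι → P, (∀ i, c i ≤ p) ∧ (∀ {i j}, i ≠ j → ¬ Compat (c i) (c j)) ∧
      (∀ {r}, r ≤ p → ∃ i, Compat r (c i)) ∧ (Compat p t → ∃ i, c i ≤ t) := by
  -- The antichain is started below a common extension of `p` and `t`, if there is one.
  obtain ⟨q, hqp, hqt⟩ : ∃ q ≤ p, Compat p t → q ≤ t := by
    by_cases h : Compat p t
    · obtain ⟨q, hq⟩ := h
      exact ⟨q, hq.1, fun _ => hq.2⟩
    · exact ⟨p, le_rfl, fun h' => (h h').elim⟩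
  obtain ⟨e, heq, he⟩ := exists_antichain_below hP hκ hι hatom q
  obtain ⟨M, heM, hMp, hM, hMdense⟩ := exists_predense_antichain_superset (p := p)
    (A := range e) (by rintro _ ⟨i, rfl⟩; exact (heq i).trans hqp)
    (by rintro _ ⟨i, rfl⟩ _ ⟨j, rfl⟩ hij; exact he (ne_of_apply_ne e hij))
  have he_inj : Function.Injective e := fun i j hij =>
    by_contra fun hne => he hne (hij ▸ compat_refl _)
  obtain ⟨f⟩ : Nonempty (M ≃ ι) := Cardinal.eq.1 <| le_antisymm ((mk_set_le M).trans hPι)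
    ((mk_range_eq e he_inj).symm.trans_le (mk_le_mk_of_subset heM))
  refine ⟨fun i => f.symm i, fun i => hMp _ (f.symm i).2,
    fun hij => hM (f.symm _).2 (f.symm _).2 fun h => hij (f.symm.injective (Subtype.ext h)),
    fun {r} hr => ?_, fun hpt => ?_⟩
  · obtain ⟨x, hx, hrx⟩ := hMdense r hr
    exact ⟨f ⟨x, hx⟩, by simpa using hrx⟩
  · obtain ⟨i⟩ := ‹Nonempty ι›
    exact ⟨f ⟨e i, heM ⟨i, rfl⟩⟩, by simpa using (heq i).trans (hqt hpt)⟩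

end Antichain

structure Refinement (ι P : Type) [PartialOrder P] where
  child : P → P → ι → P
  child_le (p t : P) (i : ι) : child p t i ≤ p
  not_compat_child (p t : P) {i j : ι} : i ≠ j → ¬ Compat (child p t i) (child p t j)
  exists_compat_child (p t : P) {r : P} : r ≤ p → ∃ i, Compat r (child p t i)
  exists_child_le (p t : P) : Compat p t → ∃ i, child p t i ≤ t

theorem nonempty_refinement {ι P : Type} [LinearOrder ι] [WellFoundedLT ι] [Nonempty ι]
    [PartialOrder P] [Nonempty P] {κ : Cardinal} (hP : HasGLBOfAntitone κ P) (hκ : ℵ₀ ≤ κ)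
    (hι : ∀ a : ι, #(Iio a) < κ) (hatom : ∀ p : P, ∃ q r : P, q ≤ p ∧ r ≤ p ∧ ¬ Compat q r)
    (hPι : #P ≤ #ι) : Nonempty (Refinement ι P) := by
  choose c hle hincompat hdense hhit using exists_children hP hκ hι hatom hPι
  exact ⟨⟨c, hle, hincompat, hdense, hhit⟩⟩

namespace Refinement

variable {ι P : Type} [LinearOrder ι] [WellFoundedLT ι] [PartialOrder P] [Nonempty P]

/-- The condition at the node `σ ↾ a` of the tree below `root` whose children at level `b` are
aimed at the target `t b`. -/
noncomputable def node (R : Refinement ι P) (t : ι → P) (root : P) (σ : ι → ι) : ι → P :=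
  descent root fun b x => R.child x (t b) (σ b)

variable {R : Refinement ι P} {t : ι → P} {root : P} {κ : Cardinal} {σ τ : ι → ι}

theorem node_congr {a : ι} (h : ∀ b < a, σ b = τ b) :
    R.node t root σ a = R.node t root τ a :=
  descent_congr fun b hb => by rw [h b hb]

theorem node_le_child (hP : HasGLBOfAntitone κ P) (hκ : ℵ₀ ≤ κ) (hι : ∀ a : ι, #(Iio a) < κ)
    {a b : ι} (h : b < a) :
    R.node t root σ a ≤ R.child (R.node t root σ b) (t b) (σ b) :=
  descent_le_step hP hκ hι (fun _ _ => R.child_le _ _ _) h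

theorem node_antitone (hP : HasGLBOfAntitone κ P) (hκ : ℵ₀ ≤ κ) (hι : ∀ a : ι, #(Iio a) < κ) :
    Antitone (R.node t root σ) :=
  descent_antitone hP hκ hι fun _ _ => R.child_le _ _ _

theorem not_compat_node (hP : HasGLBOfAntitone κ P) (hκ : ℵ₀ ≤ κ)
    (hι : ∀ a : ι, #(Iio a) < κ) {a a' b : ι} (hba : b < a) (hba' : b < a')
    (hagree : ∀ x < b, σ x = τ x) (hne : σ b ≠ τ b) :
    ¬ Compat (R.node t root σ a) (R.node t root τ a') := by
  rintro ⟨r, hrσ, hrτ⟩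
  refine R.not_compat_child _ (t b) hne ⟨r, hrσ.trans (node_le_child hP hκ hι hba), ?_⟩
  rw [node_congr hagree]
  exact hrτ.trans (node_le_child hP hκ hι hba')

theorem node_not_le [Nontrivial ι] (hP : HasGLBOfAntitone κ P) (hκ : ℵ₀ ≤ κ)
    (hι : ∀ a : ι, #(Iio a) < κ) {a b : ι} (h : b < a) :
    ¬ R.node t root σ b ≤ R.node t root σ a := by
  classical
  intro hle
  obtain ⟨j, hj⟩ := exists_ne (σ b)
  have hagree : ∀ x < b, σ x = Function.update σ b j x := fun x hx =>
    (Function.update_of_ne hx.ne _ _).symm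
  refine not_compat_node hP hκ hι h h hagree (by simpa using hj.symm)
    ⟨R.node t root (Function.update σ b j) a, ?_, le_rfl⟩
  calc R.node t root (Function.update σ b j) a
      ≤ R.node t root (Function.update σ b j) b := node_antitone hP hκ hι h.le
    _ = R.node t root σ b := (node_congr hagree).symm
    _ ≤ R.node t root σ a := hle

theorem node_le_node_iff [Nontrivial ι] (hP : HasGLBOfAntitone κ P) (hκ : ℵ₀ ≤ κ)
    (hι : ∀ a : ι, #(Iio a) < κ) {a b : ι} :
    R.node t root σ a ≤ R.node t root τ b ↔ b ≤ a ∧ ∀ x < b, σ x = τ x := by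
  constructor
  · intro h
    have hagree : ∀ x, x < a → x < b → σ x = τ x := by
      intro x
      induction x using WellFoundedLT.induction with
      | _ x ih =>
        intro hxa hxb
        by_contra hne
        exact not_compat_node hP hκ hι hxa hxb
          (fun y hy => ih y hy (hy.trans hxa) (hy.trans hxb)) hne ⟨_, le_rfl, h⟩
    have hba : b ≤ a := by
      by_contra! hab
      rw [node_congr fun x hx => hagree x hx (hx.trans hab)] at h
      exact node_not_le hP hκ hι hab h
    exact ⟨hba, fun x hx => hagree x (hx.trans_le hba) hx⟩
  · rintro ⟨hba, hagree⟩
    exact (node_antitone hP hκ hι hba).trans (node_congr hagree).le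

theorem exists_compat_node (hP : HasGLBOfAntitone κ P) (hκ : ℵ₀ ≤ κ)
    (hι : ∀ a : ι, #(Iio a) < κ) {r : P} (hr : r ≤ root) (a : ι) :
    ∃ σ, Compat (R.node t root σ a) r := by
  have : Nonempty ι := ⟨a⟩
  -- The branch `Prod.fst ∘ f` is chosen together with conditions `(f b).2`, decreasing, below `r`
  -- and below the chosen children; their glb lies below the next node, hence is compatible with
  -- one of its children.
  obtain ⟨f, hf⟩ := WellFoundedLT.exists_fun_of_forall_exists
    (fun a (f : ι → ι × P) (y : ι × P) => y.2 ≤ r ∧ (∀ b < a, y.2 ≤ (f b).2) ∧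
      y.2 ≤ R.child (R.node t root (Prod.fst ∘ f) a) (t a) y.1)
    (fun a f g y hfg ⟨hyr, hdec, hchild⟩ => ⟨hyr, fun b hb => hfg b hb ▸ hdec b hb,
      node_congr (R := R) (t := t) (root := root) (σ := Prod.fst ∘ f) (τ := Prod.fst ∘ g)
        (fun b hb => congrArg Prod.fst (hfg b hb)) ▸ hchild⟩)
    (fun a f ih => by
      have hanti : Antitone fun b : Iio a => (f b).2 := by
        intro b₁ b₂ hb
        rcases hb.eq_or_lt with rfl | hlt
        · exact le_rfl
        · exact (ih b₂ b₂.2).2.1 b₁ hlt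
      obtain ⟨w, hw⟩ := hP.exists_isGLB_insert_range hκ (hι a) hanti fun b => (ih b b.2).1
      have hwr : w ≤ r := hw.1 (mem_insert _ _)
      have hwf : ∀ b < a, w ≤ (f b).2 := fun b hb => hw.1 (mem_insert_of_mem _ ⟨⟨b, hb⟩, rfl⟩)
      have hwnode : w ≤ R.node t root (Prod.fst ∘ f) a :=
        le_descent hP hκ hι (fun _ _ => R.child_le _ _ _) (hwr.trans hr) fun b hb =>
          (hwf b hb).trans (ih b hb).2.2
      obtain ⟨i, s, hsw, hsi⟩ := R.exists_compat_child _ (t a) hwnode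
      exact ⟨(i, s), hsw.trans hwr, fun b hb => hsw.trans (hwf b hb), hsi⟩)
  exact ⟨Prod.fst ∘ f, (f a).2, (hf a).2.2.trans (R.child_le _ _ _), (hf a).1⟩

theorem exists_node_le [NoMaxOrder ι] (hP : HasGLBOfAntitone κ P) (hκ : ℵ₀ ≤ κ)
    (hι : ∀ a : ι, #(Iio a) < κ) (ht : Function.Surjective t) {r : P} (hr : r ≤ root) :
    ∃ σ a, R.node t root σ a ≤ r := by
  classical
  obtain ⟨a, rfl⟩ := ht r
  obtain ⟨σ, hσ⟩ := exists_compat_node hP hκ hι hr a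
  obtain ⟨i, hi⟩ := R.exists_child_le _ _ hσ
  obtain ⟨a', ha'⟩ := exists_gt a
  refine ⟨Function.update σ a i, a', ?_⟩
  calc R.node t root (Function.update σ a i) a'
      ≤ R.child (R.node t root (Function.update σ a i) a) (t a) (Function.update σ a i a) :=
        node_le_child hP hκ hι ha'
    _ = R.child (R.node t root σ a) (t a) i := by
        rw [Function.update_self, node_congr fun b hb => Function.update_of_ne hb.ne _ _]
    _ ≤ t a := hi

end Refinement

namespace KTree

variable {κ : Cardinal}

noncomputable def length (s : KTree κ) : κ.ord.ToType := s.2.choose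

theorem isSome_iff_lt_length (s : KTree κ) (x : κ.ord.ToType) :
    (s.1 x).isSome ↔ x < s.length :=
  s.2.choose_spec x

theorem length_eq {s : KTree κ} {a : κ.ord.ToType} (h : ∀ x, (s.1 x).isSome ↔ x < a) :
    s.length = a :=
  Iio_injective <| Set.ext fun x => (s.isSome_iff_lt_length x).symm.trans (h x)

/-- `s` as a total function; its values from `s.length` on are arbitrary. -/
def toFun (s : KTree κ) (x : κ.ord.ToType) : κ.ord.ToType := (s.1 x).getD x

theorem val_eq_some_toFun (s : KTree κ) {x : κ.ord.ToType} (hx : x < s.length) :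
    s.1 x = some (s.toFun x) :=
  (Option.getD_of_ne_none (Option.isSome_iff_ne_none.1 ((s.isSome_iff_lt_length x).2 hx)) x).symm

open scoped Classical in
noncomputable def ofFun (σ : κ.ord.ToType → κ.ord.ToType) (a : κ.ord.ToType) : KTree κ :=
  ⟨fun x => if x < a then some (σ x) else none, a, fun x => by by_cases h : x < a <;> simp [h]⟩

theorem length_ofFun (σ : κ.ord.ToType → κ.ord.ToType) (a : κ.ord.ToType) :
    (ofFun σ a).length = a :=
  length_eq fun x => by by_cases h : x < a <;> simp [ofFun, h]

theorem toFun_ofFun {σ : κ.ord.ToType → κ.ord.ToType} {a x : κ.ord.ToType} (hx : x < a) :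
    (ofFun σ a).toFun x = σ x := by
  simp [toFun, ofFun, hx]

theorem kTreeLe_iff {s t : KTree κ} :
    KTreeLe s t ↔ t.length ≤ s.length ∧ ∀ x < t.length, s.toFun x = t.toFun x := by
  constructor
  · intro h
    have hlen : t.length ≤ s.length := by
      by_contra! hlt
      have hs := h _ ((t.isSome_iff_lt_length _).2 hlt) ▸ (t.isSome_iff_lt_length _).2 hlt
      exact lt_irrefl _ ((s.isSome_iff_lt_length _).1 hs)
    refine ⟨hlen, fun x hx => Option.some_injective _ ?_⟩
    rw [← val_eq_some_toFun _ (hx.trans_le hlen), ← val_eq_some_toFun _ hx]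
    exact h x ((t.isSome_iff_lt_length x).2 hx)
  · rintro ⟨hlen, hagree⟩ x hx
    have hxt := (t.isSome_iff_lt_length x).1 hx
    rw [val_eq_some_toFun _ (hxt.trans_le hlen), val_eq_some_toFun _ hxt, hagree x hxt]

theorem kTreeLe_antisymm {s t : KTree κ} (hst : KTreeLe s t) (hts : KTreeLe t s) : s = t := by
  refine Subtype.ext (funext fun x => ?_)
  by_cases ht : (t.1 x).isSome
  · exact hst x ht
  · by_cases hs : (s.1 x).isSome
    · exact (hts x hs).symm
    · rw [Option.not_isSome_iff_eq_none.1 hs, Option.not_isSome_iff_eq_none.1 ht]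

theorem exists_dense_equiv {P : Type} [PartialOrder P] (f : KTree κ → P)
    (hf : ∀ s t, f s ≤ f t ↔ KTreeLe s t) (hdense : ∀ p, ∃ s, f s ≤ p) :
    ∃ D : Set P, (∀ p : P, ∃ q ∈ D, q ≤ p) ∧
      ∃ e : D ≃ KTree κ, ∀ x y : D, (x : P) ≤ (y : P) ↔ KTreeLe (e x) (e y) := by
  have hinj : Function.Injective f := fun s t h =>
    kTreeLe_antisymm ((hf s t).1 h.le) ((hf t s).1 h.ge)
  refine ⟨range f, fun p => ?_, (Equiv.ofInjective f hinj).symm, fun x y => ?_⟩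
  · obtain ⟨s, hs⟩ := hdense p
    exact ⟨f s, mem_range_self s, hs⟩
  · rw [← hf, Equiv.apply_ofInjective_symm hinj, Equiv.apply_ofInjective_symm hinj]

end KTree

theorem dense_subset_iso_kTree_general (κ : Cardinal) (hκ : ℵ₀ ≤ κ)
    (P : Type) [PartialOrder P] (hcard : #P = κ)
    -- every decreasing sequence of length `< κ` has a greatest lower bound
    (hseq : ∀ (ι : Type) (_ : LinearOrder ι), #ι < κ →
      ∀ q : ι → P, Antitone q → ∃ g : P, IsGLB (Set.range q) g)
    -- atomless: every condition has two incompatible extensions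
    (hatomless : ∀ p : P, ∃ q r : P, q ≤ p ∧ r ≤ p ∧ ¬ Compat q r) :
    ∃ D : Set P, (∀ p : P, ∃ q ∈ D, q ≤ p) ∧
      ∃ e : D ≃ KTree κ, ∀ x y : D, (x : P) ≤ (y : P) ↔ KTreeLe (e x) (e y) := by
  have : NoMaxOrder κ.ord.ToType := Cardinal.noMaxOrder hκ
  have : Nontrivial κ.ord.ToType := by
    rw [← Cardinal.one_lt_iff_nontrivial, mk_ord_toType]
    exact one_lt_aleph0.trans_le hκ
  have hι : ∀ a : κ.ord.ToType, #(Iio a) < κ := fun a => by simpa using mk_Iio_lt a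
  obtain ⟨top, htop⟩ := HasGLBOfAntitone.exists_forall_le hseq (aleph0_pos.trans_le hκ).ne'
  have : Nonempty P := ⟨top⟩
  obtain ⟨R⟩ := nonempty_refinement hseq hκ hι hatomless (hcard.trans (mk_ord_toType κ).symm).le
  obtain ⟨t⟩ : Nonempty (κ.ord.ToType ≃ P) := Cardinal.eq.1 ((mk_ord_toType κ).trans hcard.symm)
  refine KTree.exists_dense_equiv (fun s => R.node t top s.toFun s.length)
    (fun s s' => by rw [R.node_le_node_iff hseq hκ hι, KTree.kTreeLe_iff]) fun p => ?_
  obtain ⟨σ, a, hσa⟩ := R.exists_node_le hseq hκ hι t.surjective (htop p)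
  refine ⟨KTree.ofFun σ a, ?_⟩
  rwa [KTree.length_ofFun, Refinement.node_congr fun x hx => KTree.toFun_ofFun hx]

/-- Let `κ` be infinite with `κ^{<κ} = κ`. Every atomless separative `κ`-lattice
partial order of size `κ` in which every decreasing sequence of length `< κ` has a
greatest lower bound contains a dense subset order-isomorphic to the tree `κ^{<κ}`
ordered by reverse extension (hence is forcing-equivalent to `Add(κ,1)`). -/
theorem dense_subset_iso_kTree (κ : Cardinal) (hκ : ℵ₀ ≤ κ) (hpow : κ ^< κ = κ)
    (P : Type) [PartialOrder P] (hcard : #P = κ)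
    -- `κ`-lattice
    (hlat : ∀ S : Set P, #S < κ → (∀ p ∈ S, ∀ q ∈ S, Compat p q) → ∃ g : P, IsGLB S g)
    -- every decreasing sequence of length `< κ` has a greatest lower bound
    (hseq : ∀ (ι : Type) (_ : LinearOrder ι), #ι < κ →
      ∀ q : ι → P, Antitone q → ∃ g : P, IsGLB (Set.range q) g)
    -- atomless: every condition has two incompatible extensions
    (hatomless : ∀ p : P, ∃ q r : P, q ≤ p ∧ r ≤ p ∧ ¬ Compat q r)
    -- separative
    (hsep : ∀ p q : P, ¬ p ≤ q → ∃ r : P, r ≤ p ∧ ¬ Compat r q) :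
    ∃ D : Set P, (∀ p : P, ∃ q ∈ D, q ≤ p) ∧
      ∃ e : D ≃ KTree κ, ∀ x y : D, (x : P) ≤ (y : P) ↔ KTreeLe (e x) (e y) :=
  dense_subset_iso_kTree_general κ hκ P hcard hseq hatomless
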